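/- Let φ be a Drinfeld A-module over a local field K whose coefficients lie in O_K and whose reduction modulo m_K has positive rank. Then for every nonzero a ∈ A, the A-module action of a via φ is surjective on K^alg, on O_{K^alg}, and on m_{K^alg}; i.e. the A-modules (K^alg, φ), (O_{K^alg}, φ) and (m_{K^alg}, φ) are divisible. -/

import Mathlib

/-!
The solutions of `φ_a(η) = ξ` are the roots of `Q = ∑ c_{a,i} X^{p^i} - ξ`, which exist because
`K^alg` is algebraically closed; the point is to find one of valuation at least `w ξ / p^j`, where
`c_{a,j}` is a unit. This is a Newton polygon estimate. By Vieta, the coefficient of `X^n`,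
`n = p^j`, is `± lc(Q) · e_{d-n}(roots)`, and since it has valuation `0` some `d - n` roots `S`
satisfy `w lc(Q) + ∑_S w ≤ 0`. As `-ξ = Q(0) = ± lc(Q) · ∏ roots`, the remaining `n` roots carry
`w ξ ≤ ∑_{roots ∖ S} w ≤ n · max_{roots ∖ S} w`, and a root attaining that maximum does the job.
-/

noncomputable section

variable (p : ℕ) [Fact p.Prime] (k : Type) [Field k] [Fintype k] [CharP k p]

/-- Evaluation of the additive (twisted) polynomial `φ_a = ∑_{i=0}^{D a} c_{a,i} τ^i` on the
algebraic closure of `K`. -/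
def drinfeldEv (c : ℕ → LaurentSeries k) (D : ℕ)
    (ξ : AlgebraicClosure (LaurentSeries k)) : AlgebraicClosure (LaurentSeries k) :=
  ∑ i ∈ Finset.range (D + 1),
    algebraMap (LaurentSeries k) (AlgebraicClosure (LaurentSeries k)) (c i) * ξ ^ (p ^ i)

open Polynomial

namespace AddValuation

variable {R K Γ₀ : Type*} [CommRing R] [Field K]

section Monoid

variable [LinearOrderedAddCommMonoidWithTop Γ₀]

theorem map_multiset_prod (v : AddValuation R Γ₀) (s : Multiset R) :
    v s.prod = (s.map v).sum := by
  induction s using Multiset.induction_on with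
  | empty => simp [v.map_one]
  | cons a t ih => simp [v.map_mul, ih]

theorem exists_map_le_map_multiset_sum (v : AddValuation R Γ₀) {s : Multiset R} (hs : s ≠ 0) :
    ∃ x ∈ s, v x ≤ v s.sum := by
  induction s using Multiset.induction_on with
  | empty => exact absurd rfl hs
  | cons a t ih =>
    rw [Multiset.sum_cons]
    rcases eq_or_ne t 0 with rfl | ht
    · exact ⟨a, Multiset.mem_cons_self a 0, by simp⟩
    obtain ⟨x, hxt, hx⟩ := ih ht
    rcases v.map_add' a t.sum with ha | ht
    · exact ⟨a, Multiset.mem_cons_self a t, ha⟩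
    · exact ⟨x, Multiset.mem_cons_of_mem hxt, hx.trans ht⟩

theorem exists_submultiset_map_prod_le_map_esymm (v : AddValuation R Γ₀) (s : Multiset R)
    {m : ℕ} (hm : m ≤ Multiset.card s) :
    ∃ t ≤ s, Multiset.card t = m ∧ v t.prod ≤ v (s.esymm m) := by
  have hne : (s.powersetCard m).map Multiset.prod ≠ 0 := by
    simpa [← Multiset.card_eq_zero, Multiset.card_powersetCard] using (Nat.choose_pos hm).ne'
  obtain ⟨_, hx, hle⟩ := v.exists_map_le_map_multiset_sum hne
  obtain ⟨t, ht, rfl⟩ := Multiset.mem_map.1 hx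
  exact ⟨t, (Multiset.mem_powersetCard.1 ht).1, (Multiset.mem_powersetCard.1 ht).2, hle⟩

end Monoid

variable [LinearOrderedAddCommGroupWithTop Γ₀]

theorem exists_isRoot_map_coeff_zero_le_nsmul [IsAlgClosed K] (v : AddValuation K Γ₀)
    {Q : K[X]} {n : ℕ} (hn : n ≠ 0) (hQn : v (Q.coeff n) ≤ 0) :
    ∃ r, Q.IsRoot r ∧ v (Q.coeff 0) ≤ n • v r := by
  classical
  have hnd : n ≤ Q.natDegree := le_natDegree_of_ne_zero <|
    v.ne_top_iff.1 (hQn.trans_lt LinearOrderedAddCommGroupWithTop.top_pos).ne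
  have hcard : Multiset.card Q.roots = Q.natDegree := splits_iff_card_roots.1 (IsAlgClosed.splits Q)
  have hvieta (i : ℕ) (hi : i ≤ Q.natDegree) :
      v (Q.coeff i) = v Q.leadingCoeff + v (Q.roots.esymm (Q.natDegree - i)) := by
    rw [coeff_eq_esymm_roots_of_card hcard hi, v.map_mul, v.map_mul, v.map_pow, v.map_neg,
      v.map_one, smul_zero, add_zero]
  obtain ⟨S, hSR, hScard, hS⟩ :=
    v.exists_submultiset_map_prod_le_map_esymm Q.roots (m := Q.natDegree - n) (by omega)
  set T := Q.roots - S
  have hT : Multiset.card T = n := by rw [Multiset.card_sub hSR, hScard, hcard]; omega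
  obtain ⟨r, hrT, hrmax⟩ := Multiset.exists_max_image v (s := T) (by simpa [← hT] using hn)
  refine ⟨r, isRoot_of_mem_roots (Multiset.mem_of_le (Multiset.sub_le_self _ _) hrT), ?_⟩
  have hS' : v Q.leadingCoeff + v S.prod ≤ 0 := (add_le_add_right hS _).trans (hvieta n hnd ▸ hQn)
  calc v (Q.coeff 0) = v Q.leadingCoeff + v S.prod + v T.prod := by
        rw [hvieta 0 (Nat.zero_le _), Nat.sub_zero, ← hcard, Multiset.esymm,
          Multiset.powersetCard_self, Multiset.map_singleton, Multiset.sum_singleton,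
          ← tsub_add_cancel_of_le hSR, Multiset.prod_add, v.map_mul, add_comm (v T.prod), add_assoc]
    _ ≤ v T.prod := add_le_of_nonpos_left hS'
    _ ≤ Multiset.card (T.map v) • v r := by
        rw [v.map_multiset_prod]
        exact Multiset.sum_le_card_nsmul _ _ (by simpa using hrmax)
    _ = n • v r := by rw [Multiset.card_map, hT]

end AddValuation

section AdditivePolynomial

variable {R : Type*} [Semiring R] {q : ℕ}

theorem coeff_sum_C_mul_X_pow_pow_zero (hq : q ≠ 0) (b : ℕ → R) (D : ℕ) :
    (∑ i ∈ Finset.range (D + 1), C (b i) * X ^ (q ^ i)).coeff 0 = 0 := by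
  simp [(pow_ne_zero _ hq).symm]

theorem coeff_sum_C_mul_X_pow_pow_pow (hq : 2 ≤ q) (b : ℕ → R) {D j : ℕ} (hj : j ≤ D) :
    (∑ i ∈ Finset.range (D + 1), C (b i) * X ^ (q ^ i)).coeff (q ^ j) = b j := by
  simp [(Nat.pow_right_injective hq).eq_iff, Nat.lt_succ_of_le hj]

theorem exists_sum_mul_pow_pow_eq_and_le_nsmul {K Γ₀ : Type*} [Field K] [IsAlgClosed K]
    [LinearOrderedAddCommGroupWithTop Γ₀] (v : AddValuation K Γ₀) (hq : 2 ≤ q) (b : ℕ → K)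
    {D j : ℕ} (hj : j ≤ D) (hbj : v (b j) ≤ 0) (ξ : K) :
    ∃ η, ∑ i ∈ Finset.range (D + 1), b i * η ^ (q ^ i) = ξ ∧ v ξ ≤ q ^ j • v η := by
  have hq0 : q ≠ 0 := by omega
  obtain ⟨η, hη, hle⟩ := v.exists_isRoot_map_coeff_zero_le_nsmul
    (Q := ∑ i ∈ Finset.range (D + 1), C (b i) * X ^ (q ^ i) - C ξ)
    (pow_ne_zero j hq0) (by rwa [coeff_sub, coeff_C, if_neg (pow_ne_zero j hq0),
      sub_zero, coeff_sum_C_mul_X_pow_pow_pow hq b hj])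
  refine ⟨η, ?_, ?_⟩
  · simpa [eval_finsetSum, sub_eq_zero] using hη
  · rwa [coeff_sub, coeff_C_zero, coeff_sum_C_mul_X_pow_pow_zero hq0, zero_sub, v.map_neg] at hle

end AdditivePolynomial

theorem drinfeld_stable_reduction_divisible
    (w : AddValuation (AlgebraicClosure (LaurentSeries k)) (WithTop ℚ))
    (hw : ∀ z : LaurentSeries k,
      w (algebraMap (LaurentSeries k) (AlgebraicClosure (LaurentSeries k)) z) =
        (z.orderTop.map fun a : ℤ => (a : ℚ)))
    (A : Type) [CommRing A] (c : A → ℕ → LaurentSeries k) (D : A → ℕ)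
    (hsupp : ∀ a i, D a < i → c a i = 0)
    (hstable : ∀ a : A, a ≠ 0 → ∃ i, (c a i).orderTop = 0) :
    ∀ a : A, a ≠ 0 →
      (∀ ξ, ∃ η, drinfeldEv p k (c a) (D a) η = ξ) ∧
      (∀ ξ, 0 ≤ w ξ → ∃ η, 0 ≤ w η ∧ drinfeldEv p k (c a) (D a) η = ξ) ∧
      (∀ ξ, 0 < w ξ → ∃ η, 0 < w η ∧ drinfeldEv p k (c a) (D a) η = ξ) := by
  intro a ha
  obtain ⟨j, hj⟩ := hstable a ha
  have hjD : j ≤ D a := not_lt.1 fun h => by simp [hsupp a j h] at hj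
  have hsolve := exists_sum_mul_pow_pow_eq_and_le_nsmul w (Fact.out : p.Prime).two_le
    (fun i => algebraMap _ _ (c a i)) hjD (by simp [hw, hj])
  have hpj : p ^ j ≠ 0 := pow_ne_zero j (Fact.out : p.Prime).ne_zero
  refine ⟨fun ξ => ?_, fun ξ hξ => ?_, fun ξ hξ => ?_⟩ <;> obtain ⟨η, hη, hle⟩ := hsolve ξ
  · exact ⟨η, hη⟩
  · exact ⟨η, (nsmul_nonneg_iff hpj).1 (hξ.trans hle), hη⟩
  · exact ⟨η, (nsmul_pos_iff hpj).1 (hξ.trans_le hle), hη⟩
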